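/- arXiv:2504.00301 — 2 statements merged into one kernel-verified Lean document; each statement's English description precedes it below -/
import Mathlib

section
/- Let (a,p) ∈ P^{2N} and let (y_k^{(1)})_{k≥0} and (y_k^{(2)})_{k≥0} be two sequences of functions satisfying recurrence (R), with inverse functions t_k^{(m)} and right derivative functions v_k^{(m)} for m = 1,2. If v_0^{(1)}(t_0^{(1)}(x)) ≤ v_0^{(2)}(t_0^{(2)}(x)) for every x ≥ 0, then for every k ≥ 1 and every t ≥ 0, y_k^{(1)}(t) ≤ y_k^{(2)}(t). -/
open Filter Topology
open scoped Classical

noncomputable section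

/-- The positive part `x₊ = max x 0` of a real number. -/
def pos' (x : ℝ) : ℝ := max x 0

/-- `qq p i = p 1 + ... + p i` (so `qq p 0 = 0`). -/
def qq (p : ℕ → ℝ) (i : ℕ) : ℝ := ∑ j ∈ Finset.Icc 1 i, p j

/-- `dpar a i = a i - a (i-1)`, with the convention `a 0 = 0`. -/
def dpar (a : ℕ → ℝ) (i : ℕ) : ℝ := if i = 1 then a 1 else a i - a (i - 1)

/-- `(a, p)` is a parameter tuple in `P^{2N}`:
`0 < a 1 < a 2 < ... < a N` and `p 1, ..., p N > 0`. -/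
def IsParam (N : ℕ) (a p : ℕ → ℝ) : Prop :=
  0 < a 1 ∧ (∀ i, 1 ≤ i → i < N → a i < a (i + 1)) ∧ (∀ i, 1 ≤ i → i ≤ N → 0 < p i)

/-- `s` is a stationary tuple for the parameters `(a, p)`:
`0 < s 1 < ... < s N` and `a i = ∑_{j=1}^N p j * (s i - s j + s 1)₊` for `1 ≤ i ≤ N`. -/
def IsStationaryTuple (N : ℕ) (a p s : ℕ → ℝ) : Prop :=
  0 < s 1 ∧ (∀ i, 1 ≤ i → i < N → s i < s (i + 1)) ∧
  ∀ i, 1 ≤ i → i ≤ N → a i = ∑ j ∈ Finset.Icc 1 N, p j * pos' (s i - s j + s 1)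

/-- The inverse of (the restriction to `[0, ∞)` of) a function `y : ℝ → ℝ`. -/
def tinv (y : ℝ → ℝ) (x : ℝ) : ℝ := Function.invFunOn y (Set.Ici 0) x

/-- The right derivative of `y` at `t` (the derivative of `y` at `t` within `[t, ∞)`). -/
def rD (y : ℝ → ℝ) (t : ℝ) : ℝ := derivWithin y (Set.Ici t) t

/-- The sequence `(y k)` satisfies recurrence (R).  The condition on the initial function `y 0`
(continuous, piecewise linear with at most `N` points of non-differentiability, vanishing at `0`,
with non-decreasing right derivative taking values in `{q 1, ..., q N}`) is encoded through its
canonical representation: such functions are exactly those of the form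
`t ↦ ∑_{j=1}^N p j * (t - c j)₊` with `c` non-negative, non-decreasing and `c 1 = 0`. -/
def SatisfiesR (N : ℕ) (a p : ℕ → ℝ) (y : ℕ → ℝ → ℝ) : Prop :=
  (∃ c : ℕ → ℝ, c 1 = 0 ∧ (∀ j, 1 ≤ j → j ≤ N → 0 ≤ c j) ∧
      (∀ j, 1 ≤ j → j < N → c j ≤ c (j + 1)) ∧
      ∀ t : ℝ, 0 ≤ t → y 0 t = ∑ j ∈ Finset.Icc 1 N, p j * pos' (t - c j)) ∧
  ∀ k : ℕ, ∀ t : ℝ, 0 ≤ t →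
    y (k + 1) t = ∑ j ∈ Finset.Icc 1 N, p j * pos' (t - tinv (y k) (a j) + tinv (y k) (a 1))

/-- The breakpoints `c j` of the lower bounding trajectory `y₀⁻`:
`c 1 = 0` and `c j = d 1 / q 1 + ∑_{l=2}^j d l / q (l-1)` for `j ≥ 2`. -/
def cminus (a p : ℕ → ℝ) (j : ℕ) : ℝ :=
  if j ≤ 1 then 0
  else a 1 / qq p 1 + ∑ l ∈ Finset.Icc 2 j, (a l - a (l - 1)) / qq p (l - 1)

/-- The lower bounding initial trajectory `y₀⁻`. -/
def yminus0 (N : ℕ) (a p : ℕ → ℝ) : ℝ → ℝ :=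
  fun t => ∑ j ∈ Finset.Icc 1 N, p j * pos' (t - cminus a p j)

/-- The upper bounding initial trajectory `y₀⁺ : t ↦ q N * t`. -/
def yplus0 (N : ℕ) (p : ℕ → ℝ) : ℝ → ℝ := fun t => qq p N * t

/-- The sequence satisfying recurrence (R) with prescribed initial term `y0`. -/
def iterR (N : ℕ) (a p : ℕ → ℝ) (y0 : ℝ → ℝ) : ℕ → ℝ → ℝ
  | 0 => y0
  | k + 1 => fun t =>
      ∑ j ∈ Finset.Icc 1 N,
        p j * pos' (t - tinv (iterR N a p y0 k) (a j) + tinv (iterR N a p y0 k) (a 1))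

/-- `y` is a stationary trajectory: an increasing bijection of `[0,∞)` satisfying the
fixed-point equation of recurrence (R). -/
def IsStatTraj (N : ℕ) (a p : ℕ → ℝ) (y : ℝ → ℝ) : Prop :=
  StrictMonoOn y (Set.Ici 0) ∧ Set.BijOn y (Set.Ici 0) (Set.Ici 0) ∧
  ∀ t : ℝ, 0 ≤ t → y t = ∑ j ∈ Finset.Icc 1 N, p j * pos' (t - tinv y (a j) + tinv y (a 1))

/-- `E_N`: the set of pairs `(i, j)` with `1 ≤ i < j ≤ N`. -/
def ENfin (N : ℕ) : Finset (ℕ × ℕ) :=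
  (Finset.Icc 1 N ×ˢ Finset.Icc 1 N).filter fun e => e.1 < e.2

/-- `Nested e e'` means `e ≼_E e'`, i.e. `e` is nested in `e'`. -/
def Nested (e e' : ℕ × ℕ) : Prop := e'.1 ≤ e.1 ∧ e.1 < e.2 ∧ e.2 ≤ e'.2

/-- `E` is the edge set of a downward closed graph on `{1, ..., N}`. -/
def IsDCGraph (N : ℕ) (E : Finset (ℕ × ℕ)) : Prop :=
  E ⊆ ENfin N ∧ ∀ e ∈ E, ∀ e' : ℕ × ℕ, Nested e' e → e' ∈ E

/-- `bG E i` is the greatest `j > i` with `(i, j) ∈ E`, and `i` if there is no such `j`;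
by convention `bG E 0 = 1`. -/
def bG (E : Finset (ℕ × ℕ)) (i : ℕ) : ℕ :=
  if i = 0 then 1 else max i ((E.filter fun e => e.1 = i).sup fun e => e.2)

/-- `m(G)`: the maximal elements of `E` for `≼_E`. -/
def maxE (E : Finset (ℕ × ℕ)) : Finset (ℕ × ℕ) :=
  E.filter fun e => ∀ e' ∈ E, Nested e e' → e' = e

/-- `M(G)`: the minimal elements of `E_N \ E` for `≼_E`. -/
def minNE (N : ℕ) (E : Finset (ℕ × ℕ)) : Finset (ℕ × ℕ) :=
  (ENfin N \ E).filter fun e => ∀ e' ∈ ENfin N \ E, Nested e' e → e' = e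

/-- The map `T(G) : ℝ^N → ℝ^N`. -/
def TG (a p : ℕ → ℝ) (E : Finset (ℕ × ℕ)) (s : ℕ → ℝ) (i : ℕ) : ℝ :=
  (1 / qq p (bG E i)) * (a i + ∑ j ∈ Finset.Icc 1 (bG E i), p j * (s j - s 1))

/-- The product of `γ` over the consecutive pairs (edges) of a list of vertices. -/
def pathProd (γ : ℕ → ℕ → ℝ) (l : List ℕ) : ℝ := (List.zipWith γ l l.tail).prod

/-- `Γ i j`: the sum, over all directed paths from `i` to `j` using edges of `E`, of the
product of `γ` over the edges of the path.  Since all edges of a DC graph increase, a directed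
path from `i` to `j` is identified with the set `S ⊆ (i, j)` of its intermediate vertices,
subject to consecutive vertices being joined by edges of `E`. -/
def GammaPath (E : Finset (ℕ × ℕ)) (γ : ℕ → ℕ → ℝ) (i j : ℕ) : ℝ :=
  if i = j then 1
  else if i < j then
    ∑ S ∈ (Finset.Ioo i j).powerset,
      if List.Chain' (fun u v => (u, v) ∈ E) (Finset.sort (insert i (insert j S)) (· ≤ ·))
      then pathProd γ (Finset.sort (insert i (insert j S)) (· ≤ ·)) else 0
  else 0

/-- The edge weight `γ^G_{i,j}`. -/
def gammaG (p : ℕ → ℝ) (E : Finset (ℕ × ℕ)) (i j : ℕ) : ℝ :=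
  (qq p (bG E i) - qq p (max (j - 1) (bG E (i - 1)))) / qq p (bG E (i - 1))

/-- `Γ^G_{i,j}`. -/
def GammaG (p : ℕ → ℝ) (E : Finset (ℕ × ℕ)) (i j : ℕ) : ℝ := GammaPath E (gammaG p E) i j

/-- `z_1^G (a, p)`. -/
def z1G (N : ℕ) (a p : ℕ → ℝ) (E : Finset (ℕ × ℕ)) : ℝ :=
  (∑ j ∈ Finset.Icc 1 N, GammaG p E 1 j * dpar a j / qq p (bG E (j - 1))) /
  (1 + ∑ j ∈ Finset.Icc 1 N,
      GammaG p E 1 j * (qq p (bG E j) - qq p (bG E (j - 1))) / qq p (bG E (j - 1)))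

/-- `z_i^G (a, p)`. -/
def zG (N : ℕ) (a p : ℕ → ℝ) (E : Finset (ℕ × ℕ)) (i : ℕ) : ℝ :=
  if i = 1 then z1G N a p E
  else
    (∑ j ∈ Finset.Icc i N, GammaG p E i j * dpar a j / qq p (bG E (j - 1))) -
      z1G N a p E *
        ∑ j ∈ Finset.Icc i N,
          GammaG p E i j * (qq p (bG E j) - qq p (bG E (j - 1))) / qq p (bG E (j - 1))

/-- `Z^G_{i,j} (a, p) = z_{i+1}^G + ... + z_j^G`. -/
def ZG (N : ℕ) (a p : ℕ → ℝ) (E : Finset (ℕ × ℕ)) (i j : ℕ) : ℝ :=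
  ∑ l ∈ Finset.Icc (i + 1) j, zG N a p E l

/-- The DC graph `Gr(a, p)` read off from the stationary tuple `s = s(a, p)`: its edges are
the pairs `(i, j) ∈ E_N` with `s 1 > s j - s i`. -/
def GrEdges (N : ℕ) (s : ℕ → ℝ) : Finset (ℕ × ℕ) :=
  (ENfin N).filter fun e => s e.2 - s e.1 < s 1

/-- `ζ` solves the linear system `S^G (a, p)`. -/
def SolvesS (N : ℕ) (a p : ℕ → ℝ) (E : Finset (ℕ × ℕ)) (ζ : ℕ → ℝ) : Prop :=
  ∀ i, 1 ≤ i → i ≤ N →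
    a i = ∑ j ∈ Finset.Icc 1 (bG E i),
      p j * ((∑ l ∈ Finset.Icc 1 i, ζ l) - (∑ l ∈ Finset.Icc 1 j, ζ l) + ζ 1)

/-- `P^{2N}`, viewed as a (cylinder) subset of the space of pairs of real sequences; only the
coordinates `a 1, ..., a N, p 1, ..., p N` are constrained. -/
def Pset (N : ℕ) : Set ((ℕ → ℝ) × (ℕ → ℝ)) := {ap | IsParam N ap.1 ap.2}

/-- The region `P_G = {(a, p) ∈ P^{2N} : Gr(a, p) = G}`. -/
def PGset (N : ℕ) (E : Finset (ℕ × ℕ)) : Set ((ℕ → ℝ) × (ℕ → ℝ)) :=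
  {ap | IsParam N ap.1 ap.2 ∧ ∃ s : ℕ → ℝ, IsStationaryTuple N ap.1 ap.2 s ∧ GrEdges N s = E}

/-- The boundary of `P_G` relative to `P^{2N}`.  Since `P^{2N}` is open, the closure of `P_G`
relative to `P^{2N}` is `closure (PGset N E) ∩ Pset N` and its relative interior is
`interior (PGset N E)`. -/
def relBoundary (N : ℕ) (E : Finset (ℕ × ℕ)) : Set ((ℕ → ℝ) × (ℕ → ℝ)) :=
  (closure (PGset N E) ∩ Pset N) \ interior (PGset N E)

/-- The trajectory `y^{(m)}` built from a tuple `s`: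
`t ↦ ∑_{j=1}^N p j * (t - s j + s 1)₊`. -/
def trajOfS (N : ℕ) (p s : ℕ → ℝ) : ℝ → ℝ :=
  fun t => ∑ j ∈ Finset.Icc 1 N, p j * pos' (t - s j + s 1)

/-- The DC graph `G^{(m)}` associated with a tuple `s`: its edges are the `(i, j) ∈ E_N` with
`t^{(m)} (a i) - s j + s 1 > 0`, where `t^{(m)}` is the inverse of `trajOfS N p s`. -/
def GrFromS (N : ℕ) (a p s : ℕ → ℝ) : Finset (ℕ × ℕ) :=
  (ENfin N).filter fun e => 0 < tinv (trajOfS N p s) (a e.1) - s e.2 + s 1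

end

/-! Every term of a sequence satisfying (R) is a hinge sum `t ↦ ∑ p j * (t - c j)₊`, and the
recurrence moves its breakpoints by `c ↦ (t (a j) - t (a 1))_j`, where `t` is the inverse of the
hinge sum. The invariant is that each breakpoint of `y⁽²⁾` sits at a lower level than the
corresponding breakpoint of `y⁽¹⁾`, i.e. `y⁽²⁾ (d i) ≤ y⁽¹⁾ (c i)`; initially this is the
hypothesis on right derivatives. It forces `y⁽¹⁾` to be at most as steep as `y⁽²⁾` at equal
heights, so `x ↦ t⁽¹⁾ x - t⁽²⁾ x` is nondecreasing: the increments of `t⁽²⁾` are dominated by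
those of `t⁽¹⁾`. This gives `y⁽¹⁾_{k+1} ≤ y⁽²⁾_{k+1}` and propagates the invariant. -/

namespace RecurrenceR

open Set

lemma pos'_nonneg (x : ℝ) : 0 ≤ pos' x := le_max_right _ _

lemma pos'_mono : Monotone pos' := fun _ _ h => max_le_max h le_rfl

lemma pos'_of_nonneg {x : ℝ} (h : 0 ≤ x) : pos' x = x := max_eq_left h

lemma pos'_of_nonpos {x : ℝ} (h : x ≤ 0) : pos' x = 0 := max_eq_right h

lemma monotoneOn_Icc_of_le_succ {β : Type*} [Preorder β] {N : ℕ} {c : ℕ → β}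
    (h : ∀ j, 1 ≤ j → j < N → c j ≤ c (j + 1)) : MonotoneOn c (Icc 1 N) :=
  monotoneOn_of_le_succ ordConnected_Icc fun j _ hj hj' => by
    rw [Order.succ_eq_add_one] at hj' ⊢
    exact h j hj.1 (by have := hj'.2; omega)

theorem monotoneOn_of_hasDerivWithinAt_Ici_nonneg {f f' : ℝ → ℝ} {s : Set ℝ}
    (hs : s.OrdConnected) (hf : ContinuousOn f s)
    (hf' : ∀ x ∈ s, HasDerivWithinAt f (f' x) (Ici x) x) (h : ∀ x ∈ s, 0 ≤ f' x) :
    MonotoneOn f s := by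
  intro x hx y hy hxy
  have hsub : Icc x y ⊆ s := hs.out hx hy
  exact image_le_of_deriv_right_le_deriv_boundary (f' := fun _ => 0) continuousOn_const
    (fun z _ => hasDerivWithinAt_const z _ (f x)) le_rfl (hf.mono hsub)
    (fun z hz => hf' z (hsub (Ico_subset_Icc_self hz)))
    (fun z hz => h z (hsub (Ico_subset_Icc_self hz))) ⟨hxy, le_rfl⟩

section tinv

variable {y y' : ℝ → ℝ}

lemma tinv_congr (h : EqOn y y' (Ici 0)) : tinv y = tinv y' := by
  have hpred : ∀ x, (fun t => t ∈ Ici (0 : ℝ) ∧ y t = x) = fun t => t ∈ Ici 0 ∧ y' t = x :=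
    fun x => funext fun t => propext (and_congr_right fun ht => by rw [h ht])
  funext x
  simp only [tinv, Function.invFunOn, hpred]

lemma tinv_apply (hy : InjOn y (Ici 0)) {t : ℝ} (ht : 0 ≤ t) : tinv y (y t) = t :=
  hy.leftInvOn_invFunOn ht

lemma tinv_mem_apply (hy : SurjOn y (Ici 0) (Ici 0)) {x : ℝ} (hx : 0 ≤ x) :
    0 ≤ tinv y x ∧ y (tinv y x) = x :=
  Function.invFunOn_pos (hy hx)

lemma monotoneOn_tinv (hy : StrictMonoOn y (Ici 0)) (hy' : SurjOn y (Ici 0) (Ici 0)) :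
    MonotoneOn (tinv y) (Ici 0) := by
  intro x hx x' hx' hxx'
  obtain ⟨hu, hyu⟩ := tinv_mem_apply hy' hx
  obtain ⟨hu', hyu'⟩ := tinv_mem_apply hy' hx'
  by_contra! hlt
  have := hy hu' hu hlt
  rw [hyu, hyu'] at this
  linarith

end tinv

def hingeSum (N : ℕ) (p c : ℕ → ℝ) (t : ℝ) : ℝ := ∑ j ∈ Finset.Icc 1 N, p j * pos' (t - c j)

noncomputable def hingeSlope (N : ℕ) (p c : ℕ → ℝ) (t : ℝ) : ℝ :=
  ∑ j ∈ Finset.Icc 1 N with c j ≤ t, p j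

def IsBreakpoints (N : ℕ) (c : ℕ → ℝ) : Prop := c 1 = 0 ∧ MonotoneOn c (Icc 1 N)

lemma IsBreakpoints.nonneg {N : ℕ} {c : ℕ → ℝ} (hc : IsBreakpoints N c) {j : ℕ} (hj : 1 ≤ j)
    (hjN : j ≤ N) : 0 ≤ c j :=
  hc.1 ▸ hc.2 ⟨le_rfl, hj.trans hjN⟩ ⟨hj, hjN⟩ hj

section hingeSum

variable {N : ℕ} {p c d : ℕ → ℝ}

lemma continuous_hingeSum : Continuous (hingeSum N p c) :=
  continuous_finsetSum _ fun _ _ =>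
    continuous_const.mul ((continuous_id.sub continuous_const).max continuous_const)

lemma hingeSum_nonneg (hp : ∀ j, 1 ≤ j → j ≤ N → 0 < p j) (t : ℝ) : 0 ≤ hingeSum N p c t :=
  Finset.sum_nonneg fun j hj =>
    mul_nonneg (hp j (Finset.mem_Icc.1 hj).1 (Finset.mem_Icc.1 hj).2).le (pos'_nonneg _)

lemma hingeSum_le_hingeSum (hp : ∀ j, 1 ≤ j → j ≤ N → 0 < p j) {s t : ℝ}
    (h : ∀ j, 1 ≤ j → j ≤ N → s - c j ≤ t - d j) : hingeSum N p c s ≤ hingeSum N p d t :=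
  Finset.sum_le_sum fun j hj => by
    obtain ⟨hj1, hjN⟩ := Finset.mem_Icc.1 hj
    exact mul_le_mul_of_nonneg_left (pos'_mono (h j hj1 hjN)) (hp j hj1 hjN).le

lemma hingeSum_mono (hp : ∀ j, 1 ≤ j → j ≤ N → 0 < p j) : Monotone (hingeSum N p c) :=
  fun _ _ hst => hingeSum_le_hingeSum hp fun _ _ _ => by linarith

lemma hingeSum_zero (hc : IsBreakpoints N c) : hingeSum N p c 0 = 0 :=
  Finset.sum_eq_zero fun j hj => by
    obtain ⟨hj1, hjN⟩ := Finset.mem_Icc.1 hj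
    rw [pos'_of_nonpos (by linarith [hc.nonneg hj1 hjN]), mul_zero]

/-- The first weight `p 1` acts from time `0` on, since `c 1 = 0`. -/
lemma mul_sub_le_hingeSum_sub (hN : 1 ≤ N) (hp : ∀ j, 1 ≤ j → j ≤ N → 0 < p j) (hc1 : c 1 = 0)
    {s t : ℝ} (hs : 0 ≤ s) (hst : s ≤ t) :
    p 1 * (t - s) ≤ hingeSum N p c t - hingeSum N p c s := by
  have hterm : ∀ j ∈ Finset.Icc 1 N, 0 ≤ p j * pos' (t - c j) - p j * pos' (s - c j) := by
    intro j hj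
    obtain ⟨hj1, hjN⟩ := Finset.mem_Icc.1 hj
    rw [← mul_sub]
    exact mul_nonneg (hp j hj1 hjN).le (sub_nonneg.2 (pos'_mono (by linarith)))
  calc p 1 * (t - s) = p 1 * pos' (t - c 1) - p 1 * pos' (s - c 1) := by
        rw [hc1, sub_zero, sub_zero, pos'_of_nonneg hs, pos'_of_nonneg (hs.trans hst), mul_sub]
    _ ≤ ∑ j ∈ Finset.Icc 1 N, (p j * pos' (t - c j) - p j * pos' (s - c j)) :=
        Finset.single_le_sum hterm (Finset.mem_Icc.2 ⟨le_rfl, hN⟩)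
    _ = hingeSum N p c t - hingeSum N p c s := Finset.sum_sub_distrib _ _

lemma strictMonoOn_hingeSum (hN : 1 ≤ N) (hp : ∀ j, 1 ≤ j → j ≤ N → 0 < p j) (hc1 : c 1 = 0) :
    StrictMonoOn (hingeSum N p c) (Ici 0) := fun s hs t _ hst => by
  have := mul_sub_le_hingeSum_sub hN hp hc1 hs hst.le
  nlinarith [hp 1 le_rfl hN]

lemma surjOn_hingeSum (hN : 1 ≤ N) (hp : ∀ j, 1 ≤ j → j ≤ N → 0 < p j)
    (hc : IsBreakpoints N c) : SurjOn (hingeSum N p c) (Ici 0) (Ici 0) := by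
  intro x (hx : 0 ≤ x)
  have hp1 := hp 1 le_rfl hN
  have hT : 0 ≤ x / p 1 := div_nonneg hx hp1.le
  have hxT : x ≤ hingeSum N p c (x / p 1) := by
    have := mul_sub_le_hingeSum_sub hN hp hc.1 le_rfl hT
    rwa [sub_zero, mul_div_cancel₀ _ hp1.ne', hingeSum_zero hc, sub_zero] at this
  obtain ⟨t, ht, hft⟩ := intermediate_value_Icc hT continuous_hingeSum.continuousOn
    ⟨(hingeSum_zero hc).trans_le hx, hxT⟩
  exact ⟨t, ht.1, hft⟩

lemma tinv_hingeSum_le (hN : 1 ≤ N) (hp : ∀ j, 1 ≤ j → j ≤ N → 0 < p j)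
    (hc : IsBreakpoints N c) {x x' : ℝ} (hx : 0 ≤ x) (hx' : 0 ≤ x') :
    tinv (hingeSum N p c) x ≤ tinv (hingeSum N p c) x' + (p 1)⁻¹ * dist x x' := by
  have hp1 := hp 1 le_rfl hN
  obtain ⟨hu, hfu⟩ := tinv_mem_apply (surjOn_hingeSum hN hp hc) hx
  obtain ⟨hu', hfu'⟩ := tinv_mem_apply (surjOn_hingeSum hN hp hc) hx'
  rcases le_total (tinv (hingeSum N p c) x) (tinv (hingeSum N p c) x') with h | h
  · have : 0 ≤ (p 1)⁻¹ * dist x x' := by positivity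
    linarith
  · have hgap := mul_sub_le_hingeSum_sub hN hp hc.1 hu' h
    rw [hfu, hfu'] at hgap
    have hdist : tinv (hingeSum N p c) x - tinv (hingeSum N p c) x' ≤ (p 1)⁻¹ * dist x x' := by
      rw [Real.dist_eq, inv_mul_eq_div, le_div_iff₀ hp1]
      linarith [le_abs_self (x - x')]
    linarith

lemma continuousOn_tinv_hingeSum (hN : 1 ≤ N) (hp : ∀ j, 1 ≤ j → j ≤ N → 0 < p j)
    (hc : IsBreakpoints N c) : ContinuousOn (tinv (hingeSum N p c)) (Ici 0) :=
  (LipschitzOnWith.of_le_add_mul' _ fun _ hx _ hx' =>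
    tinv_hingeSum_le hN hp hc hx hx').continuousOn

lemma hingeSum_eventuallyEq (t : ℝ) :
    ∀ᶠ u in 𝓝[≥] t, hingeSum N p c u = hingeSum N p c t + hingeSlope N p c t * (u - t) := by
  have hterm : ∀ j ∈ Finset.Icc 1 N, ∀ᶠ u in 𝓝[≥] t,
      p j * pos' (u - c j) = p j * pos' (t - c j) + (if c j ≤ t then p j else 0) * (u - t) := by
    intro j _
    by_cases hj : c j ≤ t
    · filter_upwards [self_mem_nhdsWithin] with u (hu : t ≤ u)
      rw [pos'_of_nonneg (by linarith), pos'_of_nonneg (by linarith), if_pos hj]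
      ring
    · filter_upwards [nhdsWithin_le_nhds (eventually_lt_nhds (not_le.1 hj))] with u hu
      rw [pos'_of_nonpos (by linarith), pos'_of_nonpos (by linarith), if_neg hj]
      ring
  filter_upwards [(Finset.eventually_all _).2 hterm] with u hu
  rw [hingeSum, Finset.sum_congr rfl hu, Finset.sum_add_distrib, hingeSlope, Finset.sum_filter,
    Finset.sum_mul, hingeSum]

lemma hasDerivWithinAt_hingeSum (t : ℝ) :
    HasDerivWithinAt (hingeSum N p c) (hingeSlope N p c t) (Ici t) t := by
  have hlin : HasDerivWithinAt (fun u => hingeSum N p c t + hingeSlope N p c t * (u - t))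
      (hingeSlope N p c t) (Ici t) t := by
    simpa using (((hasDerivAt_id t).sub_const t).const_mul (hingeSlope N p c t)).const_add
      (hingeSum N p c t) |>.hasDerivWithinAt
  exact hlin.congr_of_eventuallyEq (hingeSum_eventuallyEq t) (by simp)

lemma rD_eq_hingeSlope {y : ℝ → ℝ} (hy : EqOn y (hingeSum N p c) (Ici 0)) {t : ℝ} (ht : 0 ≤ t) :
    rD y t = hingeSlope N p c t :=
  ((hasDerivWithinAt_hingeSum t).congr (fun _ hu => hy (ht.trans hu)) (hy ht)).derivWithin
    (uniqueDiffOn_Ici t t self_mem_Ici)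

lemma qq_le_hingeSlope (hp : ∀ j, 1 ≤ j → j ≤ N → 0 < p j) (hc : MonotoneOn c (Icc 1 N))
    {i : ℕ} (hi : 1 ≤ i) (hiN : i ≤ N) {t : ℝ} (ht : c i ≤ t) : qq p i ≤ hingeSlope N p c t := by
  refine Finset.sum_le_sum_of_subset_of_nonneg (fun j hj => ?_) fun j hj _ => ?_
  · obtain ⟨hj1, hji⟩ := Finset.mem_Icc.1 hj
    exact Finset.mem_filter.2 ⟨Finset.mem_Icc.2 ⟨hj1, hji.trans hiN⟩,
      (hc ⟨hj1, hji.trans hiN⟩ ⟨hi, hiN⟩ hji).trans ht⟩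
  · obtain ⟨hj1, hjN⟩ := Finset.mem_Icc.1 (Finset.mem_filter.1 hj).1
    exact (hp j hj1 hjN).le

lemma hingeSlope_le_qq (hp : ∀ j, 1 ≤ j → j ≤ N → 0 < p j) (hc : MonotoneOn c (Icc 1 N))
    {i : ℕ} (hiN : i + 1 ≤ N) {t : ℝ} (ht : t < c (i + 1)) : hingeSlope N p c t ≤ qq p i := by
  refine Finset.sum_le_sum_of_subset_of_nonneg (fun j hj => ?_) fun j hj _ => ?_
  · obtain ⟨hjN, hjt⟩ := Finset.mem_filter.1 hj
    obtain ⟨hj1, hjN⟩ := Finset.mem_Icc.1 hjN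
    refine Finset.mem_Icc.2 ⟨hj1, not_lt.1 fun hij => ?_⟩
    linarith [hc ⟨by omega, hiN⟩ ⟨hj1, hjN⟩ (Nat.succ_le_of_lt hij)]
  · obtain ⟨hj1, hji⟩ := Finset.mem_Icc.1 hj
    exact (hp j hj1 (by omega)).le

lemma hingeSlope_pos (hN : 1 ≤ N) (hp : ∀ j, 1 ≤ j → j ≤ N → 0 < p j) (hc : IsBreakpoints N c)
    {t : ℝ} (ht : 0 ≤ t) : 0 < hingeSlope N p c t :=
  (by simpa [qq] using hp 1 le_rfl hN : 0 < qq p 1).trans_le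
    (qq_le_hingeSlope hp hc.2 le_rfl hN (hc.1.trans_le ht))

lemma hasDerivWithinAt_tinv_hingeSum (hN : 1 ≤ N) (hp : ∀ j, 1 ≤ j → j ≤ N → 0 < p j)
    (hc : IsBreakpoints N c) {x : ℝ} (hx : 0 ≤ x) :
    HasDerivWithinAt (tinv (hingeSum N p c))
      (hingeSlope N p c (tinv (hingeSum N p c) x))⁻¹ (Ici x) x := by
  obtain ⟨ht, hft⟩ := tinv_mem_apply (surjOn_hingeSum hN hp hc) hx
  set t := tinv (hingeSum N p c) x
  set s := hingeSlope N p c t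
  have hs : 0 < s := hingeSlope_pos hN hp hc ht
  -- near `x` from the right, the inverse is the inverse of the local linear branch
  set φ : ℝ → ℝ := fun u => t + s⁻¹ * (u - x)
  have hφ : HasDerivAt φ s⁻¹ x := by
    simpa [φ] using (((hasDerivAt_id x).sub_const x).const_mul s⁻¹).const_add t
  have hφt : Tendsto φ (𝓝[≥] x) (𝓝[≥] t) := by
    refine tendsto_nhdsWithin_of_tendsto_nhds_of_eventually_within _ ?_ ?_
    · simpa [φ] using hφ.continuousAt.tendsto.mono_left nhdsWithin_le_nhds
    · filter_upwards [self_mem_nhdsWithin] with u (hu : x ≤ u)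
      exact le_add_of_nonneg_right (mul_nonneg (inv_nonneg.2 hs.le) (by linarith))
  refine hφ.hasDerivWithinAt.congr_of_eventuallyEq ?_ (by simp [φ, t])
  filter_upwards [hφt.eventually (hingeSum_eventuallyEq t), hφt self_mem_nhdsWithin]
    with u hu (hu0 : t ≤ φ u)
  have hfφ : hingeSum N p c (φ u) = u := by
    rw [hu, hft]
    change x + s * (t + s⁻¹ * (u - x) - t) = u
    field_simp
    ring
  have hinv := tinv_apply (strictMonoOn_hingeSum hN hp hc.1).injOn (ht.trans hu0)
  rwa [hfφ] at hinv

end hingeSum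

def BreakLevelsLE (N : ℕ) (p d c : ℕ → ℝ) : Prop :=
  ∀ i, 1 ≤ i → i ≤ N → hingeSum N p d (d i) ≤ hingeSum N p c (c i)

section levels

variable {N : ℕ} {p c d : ℕ → ℝ}

lemma hingeSlope_le_of_breakLevelsLE (hN : 1 ≤ N) (hp : ∀ j, 1 ≤ j → j ≤ N → 0 < p j)
    (hc : IsBreakpoints N c) (hd : IsBreakpoints N d) (hlev : BreakLevelsLE N p d c)
    {x : ℝ} (hx : 0 ≤ x) :
    hingeSlope N p c (tinv (hingeSum N p c) x) ≤ hingeSlope N p d (tinv (hingeSum N p d) x) := by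
  obtain ⟨-, hfc⟩ := tinv_mem_apply (surjOn_hingeSum hN hp hc) hx
  obtain ⟨hu, hfd⟩ := tinv_mem_apply (surjOn_hingeSum hN hp hd) hx
  refine Finset.sum_le_sum_of_subset_of_nonneg (fun j hj => ?_) fun j hj _ => ?_
  · obtain ⟨hjN, hcj⟩ := Finset.mem_filter.1 hj
    obtain ⟨hj1, hjN'⟩ := Finset.mem_Icc.1 hjN
    refine Finset.mem_filter.2 ⟨hjN, not_lt.1 fun hlt => ?_⟩
    have hlt' := strictMonoOn_hingeSum hN hp hd.1 hu (hu.trans hlt.le) hlt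
    have hcx := hingeSum_mono (c := c) hp hcj
    rw [hfd] at hlt'
    rw [hfc] at hcx
    linarith [hlev j hj1 hjN']
  · obtain ⟨hj1, hjN⟩ := Finset.mem_Icc.1 (Finset.mem_filter.1 hj).1
    exact (hp j hj1 hjN).le

lemma monotoneOn_tinv_sub_tinv (hN : 1 ≤ N) (hp : ∀ j, 1 ≤ j → j ≤ N → 0 < p j)
    (hc : IsBreakpoints N c) (hd : IsBreakpoints N d) (hlev : BreakLevelsLE N p d c) :
    MonotoneOn (fun x => tinv (hingeSum N p c) x - tinv (hingeSum N p d) x) (Ici 0) := by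
  refine monotoneOn_of_hasDerivWithinAt_Ici_nonneg ordConnected_Ici
    ((continuousOn_tinv_hingeSum hN hp hc).sub (continuousOn_tinv_hingeSum hN hp hd))
    (fun x hx => (hasDerivWithinAt_tinv_hingeSum hN hp hc hx).sub
      (hasDerivWithinAt_tinv_hingeSum hN hp hd hx)) fun x (hx : 0 ≤ x) => ?_
  have hslope := hingeSlope_le_of_breakLevelsLE hN hp hc hd hlev hx
  have hpos := hingeSlope_pos hN hp hc (tinv_mem_apply (surjOn_hingeSum hN hp hc) hx).1
  exact sub_nonneg.2 (inv_anti₀ hpos hslope)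

lemma pos'_tinv_sub_le (hN : 1 ≤ N) (hp : ∀ j, 1 ≤ j → j ≤ N → 0 < p j)
    (hc : IsBreakpoints N c) (hd : IsBreakpoints N d) (hlev : BreakLevelsLE N p d c)
    {x x' : ℝ} (hx : 0 ≤ x) (hx' : 0 ≤ x') :
    pos' (tinv (hingeSum N p d) x' - tinv (hingeSum N p d) x)
      ≤ pos' (tinv (hingeSum N p c) x' - tinv (hingeSum N p c) x) := by
  rcases le_total x x' with h | h
  · refine pos'_mono ?_
    linarith [monotoneOn_tinv_sub_tinv hN hp hc hd hlev hx hx' h]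
  · rw [pos'_of_nonpos (sub_nonpos.2 (monotoneOn_tinv
      (strictMonoOn_hingeSum hN hp hd.1) (surjOn_hingeSum hN hp hd) hx' hx h))]
    exact pos'_nonneg _

lemma breakLevelsLE_of_rD {y1 y2 : ℝ → ℝ} (hN : 1 ≤ N) (hp : ∀ j, 1 ≤ j → j ≤ N → 0 < p j)
    (hc : IsBreakpoints N c) (hd : IsBreakpoints N d)
    (hy1 : EqOn y1 (hingeSum N p c) (Ici 0)) (hy2 : EqOn y2 (hingeSum N p d) (Ici 0))
    (h0 : ∀ x : ℝ, 0 ≤ x → rD y1 (tinv y1 x) ≤ rD y2 (tinv y2 x)) :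
    BreakLevelsLE N p d c := by
  intro i hi hiN
  obtain ⟨i, rfl⟩ := Nat.exists_eq_add_of_le' hi
  have hci := hc.nonneg hi hiN
  set x := hingeSum N p c (c (i + 1))
  have hx : 0 ≤ x := hingeSum_nonneg hp _
  have htc : tinv y1 x = c (i + 1) := by
    rw [tinv_congr hy1, tinv_apply (strictMonoOn_hingeSum hN hp hc.1).injOn hci]
  obtain ⟨hu, hfd⟩ := tinv_mem_apply (surjOn_hingeSum hN hp hd) hx
  rw [← tinv_congr hy2] at hu hfd
  -- the slope of `y1` at `c (i + 1)` counts `p (i + 1)`, that of `y2` before `d (i + 1)` does not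
  have hdi : d (i + 1) ≤ tinv y2 x := by
    by_contra! hlt
    have h0x := h0 x hx
    rw [rD_eq_hingeSlope hy1 (htc ▸ hci), rD_eq_hingeSlope hy2 hu, htc] at h0x
    have hq : qq p (i + 1) = qq p i + p (i + 1) := Finset.sum_Icc_succ_top (by omega) p
    linarith [qq_le_hingeSlope hp hc.2 hi hiN le_rfl, hingeSlope_le_qq hp hd.2 hiN hlt,
      hp (i + 1) hi hiN]
  exact (hingeSum_mono hp hdi).trans hfd.le

end levels

/-- One step of recurrence (R), acting on the breakpoints of a hinge sum. -/
noncomputable def nextBreaks (N : ℕ) (a p c : ℕ → ℝ) (j : ℕ) : ℝ :=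
  tinv (hingeSum N p c) (a j) - tinv (hingeSum N p c) (a 1)

section nextBreaks

variable {N : ℕ} {a p c d : ℕ → ℝ}

lemma SatisfiesR.exists_isBreakpoints {y : ℕ → ℝ → ℝ} (hy : SatisfiesR N a p y) :
    ∃ c, IsBreakpoints N c ∧ EqOn (y 0) (hingeSum N p c) (Ici 0) := by
  obtain ⟨⟨c, hc1, -, hcs, hy0⟩, -⟩ := hy
  exact ⟨c, ⟨hc1, monotoneOn_Icc_of_le_succ hcs⟩, fun t ht => hy0 t ht⟩

lemma SatisfiesR.eqOn_iterate {y : ℕ → ℝ → ℝ} (hy : SatisfiesR N a p y)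
    (hy0 : EqOn (y 0) (hingeSum N p c) (Ici 0)) :
    ∀ k, EqOn (y k) (hingeSum N p ((nextBreaks N a p)^[k] c)) (Ici 0) := by
  intro k
  induction k with
  | zero => exact hy0
  | succ k ih =>
    intro t ht
    rw [hy.2 k t ht, Function.iterate_succ_apply', tinv_congr ih]
    refine Finset.sum_congr rfl fun j _ => ?_
    rw [nextBreaks, sub_sub_eq_add_sub, sub_add_eq_add_sub]

lemma IsBreakpoints.nextBreaks (hN : 1 ≤ N) (hp : ∀ j, 1 ≤ j → j ≤ N → 0 < p j)
    (ha : MonotoneOn a (Icc 1 N)) (ha1 : 0 ≤ a 1) (hc : IsBreakpoints N c) :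
    IsBreakpoints N (nextBreaks N a p c) := by
  refine ⟨sub_self _, fun i hi j hj hij => sub_le_sub_right ?_ _⟩
  exact monotoneOn_tinv (strictMonoOn_hingeSum hN hp hc.1) (surjOn_hingeSum hN hp hc)
    (ha1.trans (ha ⟨le_rfl, hN⟩ hi hi.1)) (ha1.trans (ha ⟨le_rfl, hN⟩ hj hj.1)) (ha hi hj hij)

lemma BreakLevelsLE.nextBreaks (hN : 1 ≤ N) (hp : ∀ j, 1 ≤ j → j ≤ N → 0 < p j)
    (ha : MonotoneOn a (Icc 1 N)) (ha1 : 0 ≤ a 1) (hc : IsBreakpoints N c)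
    (hd : IsBreakpoints N d) (hlev : BreakLevelsLE N p d c) :
    BreakLevelsLE N p (nextBreaks N a p d) (nextBreaks N a p c) := by
  have ha0 : ∀ j, 1 ≤ j → j ≤ N → 0 ≤ a j := fun j hj hjN =>
    ha1.trans (ha ⟨le_rfl, hN⟩ ⟨hj, hjN⟩ hj)
  intro i hi hiN
  refine Finset.sum_le_sum fun j hj => ?_
  obtain ⟨hj1, hjN⟩ := Finset.mem_Icc.1 hj
  refine mul_le_mul_of_nonneg_left ?_ (hp j hj1 hjN).le
  simp only [RecurrenceR.nextBreaks, sub_sub_sub_cancel_right]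
  exact pos'_tinv_sub_le hN hp hc hd hlev (ha0 j hj1 hjN) (ha0 i hi hiN)

lemma hingeSum_nextBreaks_le (hN : 1 ≤ N) (hp : ∀ j, 1 ≤ j → j ≤ N → 0 < p j)
    (ha : MonotoneOn a (Icc 1 N)) (ha1 : 0 ≤ a 1) (hc : IsBreakpoints N c)
    (hd : IsBreakpoints N d) (hlev : BreakLevelsLE N p d c) (t : ℝ) :
    hingeSum N p (nextBreaks N a p c) t ≤ hingeSum N p (nextBreaks N a p d) t := by
  refine hingeSum_le_hingeSum hp fun j hj hjN => ?_
  have := monotoneOn_tinv_sub_tinv hN hp hc hd hlev (ha1 : a 1 ∈ Ici 0)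
    (ha1.trans (ha ⟨le_rfl, hN⟩ ⟨hj, hjN⟩ hj)) (ha ⟨le_rfl, hN⟩ ⟨hj, hjN⟩ hj)
  simp only [RecurrenceR.nextBreaks]
  linarith

end nextBreaks

end RecurrenceR

open RecurrenceR in
/-- comparison of trajectories, Proposition 3.5 of the paper. -/
theorem stmt_3 (N : ℕ) (hN : 1 ≤ N) (a p : ℕ → ℝ) (hap : IsParam N a p)
    (y1 y2 : ℕ → ℝ → ℝ) (h1 : SatisfiesR N a p y1) (h2 : SatisfiesR N a p y2)
    (h0 : ∀ x : ℝ, 0 ≤ x → rD (y1 0) (tinv (y1 0) x) ≤ rD (y2 0) (tinv (y2 0) x)) :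
    ∀ k : ℕ, 1 ≤ k → ∀ t : ℝ, 0 ≤ t → y1 k t ≤ y2 k t := by
  obtain ⟨ha1, has, hp⟩ := hap
  have ha := monotoneOn_Icc_of_le_succ fun i hi hiN => (has i hi hiN).le
  obtain ⟨c, hc, hy1⟩ := h1.exists_isBreakpoints
  obtain ⟨d, hd, hy2⟩ := h2.exists_isBreakpoints
  have hinv : ∀ k, IsBreakpoints N ((nextBreaks N a p)^[k] c) ∧
      IsBreakpoints N ((nextBreaks N a p)^[k] d) ∧
      BreakLevelsLE N p ((nextBreaks N a p)^[k] d) ((nextBreaks N a p)^[k] c) := by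
    intro k
    induction k with
    | zero => exact ⟨hc, hd, breakLevelsLE_of_rD hN hp hc hd hy1 hy2 h0⟩
    | succ k ih =>
      obtain ⟨hck, hdk, hlev⟩ := ih
      simp only [Function.iterate_succ_apply']
      exact ⟨hck.nextBreaks hN hp ha ha1.le, hdk.nextBreaks hN hp ha ha1.le,
        hlev.nextBreaks hN hp ha ha1.le hck hdk⟩
  intro k hk t ht
  obtain ⟨k, rfl⟩ := Nat.exists_eq_add_of_le' hk
  obtain ⟨hck, hdk, hlev⟩ := hinv k
  rw [h1.eqOn_iterate hy1 (k + 1) ht, h2.eqOn_iterate hy2 (k + 1) ht,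
    Function.iterate_succ_apply', Function.iterate_succ_apply']
  exact hingeSum_nextBreaks_le hN hp ha ha1.le hck hdk hlev t
end

section
/- Let (a,p) ∈ P^{2N} and let (y_k)_{k≥0} satisfy recurrence (R), where in addition the initial function y_0 satisfies: for every i ∈ {1,...,N} and every t ≥ 0 with y_0(t) ≥ a_i, the right derivative of y_0 at t is at least q_i. Then for every k ≥ 0 and every t ≥ 0, y_k^−(t) ≤ y_k(t) ≤ y_k^+(t). -/
open Filter Topology
open scoped Classical

/-!
Every trajectory of (R) has the form `t ↦ ∑ⱼ pⱼ (t - Tⱼ)₊` with breakpoints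
`0 = T₁ ≤ ⋯ ≤ T_N`, and (R) replaces the breakpoints `T` by `T'ⱼ = t_T(aⱼ) - t_T(a₁)`, where
`t_T` is the inverse of the trajectory. On `[0, ∞)` a trajectory is determined by its heights
`hⱼ = y(Tⱼ)`, and larger heights give a smaller trajectory. The inverse is concave with slope
`1 / q_m` on `[h_m, h_{m+1}]`, so
`t_T(w) - t_T(v) = (w - v) / q_N + ∑ₗ (1 / qₗ - 1 / q_{l+1}) (min(w, h_{l+1}) - min(v, h_{l+1}))`
is increasing in the heights. Hence so are the heights `∑_{l ≤ j} pₗ (t_T(aⱼ) - t_T(aₗ))` of the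
next trajectory, and an ordering of heights propagates along (R). Initially the heights of `y₀⁺`
vanish, those of `y₀⁻` are `0, a₂, …, a_N`, and those of `y₀` are at most `aᵢ`: otherwise `y₀`
reaches the level `aᵢ` before `Tᵢ`, where its right derivative is at most `q_{i-1} < qᵢ`.
-/

noncomputable section

open Finset

variable {N : ℕ} {a p T T' : ℕ → ℝ}

lemma pos'_nonneg (x : ℝ) : 0 ≤ pos' x := le_max_right _ _

lemma pos'_mono : Monotone pos' := fun _ _ h => max_le_max h le_rfl

lemma pos'_of_nonneg {x : ℝ} (h : 0 ≤ x) : pos' x = x := max_eq_left h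

lemma pos'_of_nonpos {x : ℝ} (h : x ≤ 0) : pos' x = 0 := max_eq_right h

lemma sum_Icc_one_eq_add {M : Type*} [AddCommMonoid M] (f : ℕ → M) {m n : ℕ} (hmn : m ≤ n) :
    ∑ j ∈ Icc 1 n, f j = ∑ j ∈ Icc 1 m, f j + ∑ j ∈ Ioc m n, f j := by
  rw [← zero_add 1, Icc_add_one_left_eq_Ioc, Icc_add_one_left_eq_Ioc,
    sum_Ioc_consecutive f (Nat.zero_le m) hmn]

lemma sum_Ico_sub_succ {G : Type*} [AddCommGroup G] (f : ℕ → G) {m n : ℕ} (hmn : m ≤ n) :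
    ∑ l ∈ Ico m n, (f l - f (l + 1)) = f m - f n := by
  rw [← neg_sub, ← sum_Ico_sub f hmn, ← sum_neg_distrib]
  simp only [neg_sub]

lemma monotoneOn_Icc_of_le_succ {α : Type*} [Preorder α] {f : ℕ → α}
    (hf : ∀ j, 1 ≤ j → j < N → f j ≤ f (j + 1)) : MonotoneOn f (Set.Icc 1 N) :=
  monotoneOn_of_le_succ Set.ordConnected_Icc fun j _ hj hj' => hf j hj.1 hj'.2

lemma qq_succ (p : ℕ → ℝ) (m : ℕ) : qq p (m + 1) = qq p m + p (m + 1) :=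
  sum_Icc_succ_top (by omega) p

lemma qq_one : qq p 1 = p 1 := by simp [qq]

lemma qq_mono (hp : ∀ i, 1 ≤ i → i ≤ N → 0 < p i) {m m' : ℕ} (h : m ≤ m') (hm' : m' ≤ N) :
    qq p m ≤ qq p m' :=
  sum_le_sum_of_subset_of_nonneg (Icc_subset_Icc le_rfl h) fun i hi _ =>
    (hp i (mem_Icc.1 hi).1 ((mem_Icc.1 hi).2.trans hm')).le

lemma qq_pos (hp : ∀ i, 1 ≤ i → i ≤ N → 0 < p i) {m : ℕ} (h1 : 1 ≤ m) (hm : m ≤ N) :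
    0 < qq p m :=
  (qq_one (p := p) ▸ hp 1 le_rfl (h1.trans hm)).trans_le (qq_mono hp h1 hm)

lemma IsParam.monotoneOn (hap : IsParam N a p) : MonotoneOn a (Set.Icc 1 N) :=
  monotoneOn_Icc_of_le_succ fun i h1 hi => (hap.2.1 i h1 hi).le

lemma IsParam.pos (hap : IsParam N a p) {i : ℕ} (h1 : 1 ≤ i) (hi : i ≤ N) : 0 < a i :=
  hap.1.trans_le (hap.monotoneOn ⟨le_rfl, h1.trans hi⟩ ⟨h1, hi⟩ h1)

namespace Trajectory

def traj (N : ℕ) (p T : ℕ → ℝ) (t : ℝ) : ℝ := ∑ j ∈ Icc 1 N, p j * pos' (t - T j)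

def IsBreakpoints (N : ℕ) (T : ℕ → ℝ) : Prop := T 1 = 0 ∧ MonotoneOn T (Set.Icc 1 N)

def height (N : ℕ) (p T : ℕ → ℝ) (j : ℕ) : ℝ := traj N p T (T j)

lemma IsBreakpoints.nonneg (hT : IsBreakpoints N T) {j : ℕ} (h1 : 1 ≤ j) (hj : j ≤ N) :
    0 ≤ T j :=
  hT.1 ▸ hT.2 ⟨le_rfl, h1.trans hj⟩ ⟨h1, hj⟩ h1

lemma traj_nonneg (hp : ∀ i, 1 ≤ i → i ≤ N → 0 < p i) (t : ℝ) : 0 ≤ traj N p T t :=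
  sum_nonneg fun j hj => mul_nonneg (hp j (mem_Icc.1 hj).1 (mem_Icc.1 hj).2).le (pos'_nonneg _)

lemma traj_mono (hp : ∀ i, 1 ≤ i → i ≤ N → 0 < p i) : Monotone (traj N p T) := fun s t hst =>
  sum_le_sum fun j hj => mul_le_mul_of_nonneg_left (pos'_mono (by linarith))
    (hp j (mem_Icc.1 hj).1 (mem_Icc.1 hj).2).le

lemma traj_zero (hT : IsBreakpoints N T) : traj N p T 0 = 0 :=
  sum_eq_zero fun j hj => by
    rw [pos'_of_nonpos (by linarith [hT.nonneg (mem_Icc.1 hj).1 (mem_Icc.1 hj).2]), mul_zero]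

lemma traj_strictMonoOn (hN : 1 ≤ N) (hp : ∀ i, 1 ≤ i → i ≤ N → 0 < p i)
    (hT : IsBreakpoints N T) : StrictMonoOn (traj N p T) (Set.Ici 0) := by
  intro s hs t ht hst
  apply sum_lt_sum fun j hj => mul_le_mul_of_nonneg_left (pos'_mono (by linarith))
    (hp j (mem_Icc.1 hj).1 (mem_Icc.1 hj).2).le
  refine ⟨1, mem_Icc.2 ⟨le_rfl, hN⟩, mul_lt_mul_of_pos_left ?_ (hp 1 le_rfl hN)⟩
  rwa [hT.1, sub_zero, sub_zero, pos'_of_nonneg hs, pos'_of_nonneg ht]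

lemma traj_sub_traj (hT : IsBreakpoints N T) {m : ℕ} (hm : m ≤ N) {s t : ℝ}
    (hs : T m ≤ s) (hst : s ≤ t) (ht : ∀ j, m < j → j ≤ N → t ≤ T j) :
    traj N p T t - traj N p T s = qq p m * (t - s) := by
  have hhead : ∀ j ∈ Icc 1 m, p j * pos' (t - T j) - p j * pos' (s - T j) = p j * (t - s) := by
    intro j hj
    obtain ⟨h1, hjm⟩ := mem_Icc.1 hj
    have := hT.2 ⟨h1, hjm.trans hm⟩ ⟨h1.trans hjm, hm⟩ hjm
    rw [pos'_of_nonneg (by linarith), pos'_of_nonneg (by linarith)]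
    ring
  have htail : ∀ j ∈ Ioc m N, p j * pos' (t - T j) - p j * pos' (s - T j) = 0 := by
    intro j hj
    have := ht j (mem_Ioc.1 hj).1 (mem_Ioc.1 hj).2
    rw [pos'_of_nonpos (by linarith), pos'_of_nonpos (by linarith), sub_self]
  rw [traj, traj, ← sum_sub_distrib, sum_Icc_one_eq_add _ hm, sum_congr rfl hhead,
    sum_congr rfl htail, sum_const_zero, add_zero, qq, sum_mul]

lemma height_one (hT : IsBreakpoints N T) : height N p T 1 = 0 := by
  rw [height, hT.1, traj_zero hT]

lemma height_nonneg (hp : ∀ i, 1 ≤ i → i ≤ N → 0 < p i) (j : ℕ) : 0 ≤ height N p T j :=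
  traj_nonneg hp _

lemma height_monotoneOn (hp : ∀ i, 1 ≤ i → i ≤ N → 0 < p i) (hT : IsBreakpoints N T) :
    MonotoneOn (height N p T) (Set.Icc 1 N) :=
  (traj_mono hp).comp_monotoneOn hT.2

lemma height_succ (hT : IsBreakpoints N T) {j : ℕ} (h1 : 1 ≤ j) (hj : j < N) :
    height N p T (j + 1) = height N p T j + qq p j * (T (j + 1) - T j) := by
  have := traj_sub_traj (p := p) hT hj.le le_rfl
    (hT.2 ⟨h1, hj.le⟩ ⟨by omega, hj⟩ (Nat.le_succ j))
    fun i hi hiN => hT.2 ⟨by omega, hj⟩ ⟨by omega, hiN⟩ hi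
  rw [height, height]
  linarith

lemma height_eq_sum (hT : IsBreakpoints N T) {j : ℕ} (h1 : 1 ≤ j) (hj : j ≤ N) :
    height N p T j = ∑ l ∈ Icc 1 j, p l * (T j - T l) := by
  induction j, h1 using Nat.le_induction with
  | base => simp [height_one hT]
  | succ j h1 ih =>
    rw [height_succ hT h1 hj, ih (by omega), sum_Icc_succ_top (by omega), sub_self, mul_zero,
      add_zero, qq, sum_mul, ← sum_add_distrib]
    exact sum_congr rfl fun l _ => by ring

/-- The inverse of `traj N p T` on `[0, ∞)` (see `traj_trajInv`): its slope is `1 / qq p m`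
between the heights `m` and `m + 1`, and `1 / qq p N` above the last height. -/
def trajInv (N : ℕ) (p T : ℕ → ℝ) (v : ℝ) : ℝ :=
  v / qq p N + ∑ l ∈ Ico 1 N, (1 / qq p l - 1 / qq p (l + 1)) * min v (height N p T (l + 1))

lemma one_div_qq_sub_one_div_qq_succ_nonneg (hp : ∀ i, 1 ≤ i → i ≤ N → 0 < p i) {l : ℕ}
    (h1 : 1 ≤ l) (hl : l < N) : 0 ≤ 1 / qq p l - 1 / qq p (l + 1) :=
  sub_nonneg.2 (one_div_le_one_div_of_le (qq_pos hp h1 hl.le) (qq_mono hp (Nat.le_succ l) hl))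


lemma trajInv_mono (hp : ∀ i, 1 ≤ i → i ≤ N → 0 < p i) : Monotone (trajInv N p T) := by
  intro v w hvw
  rcases Nat.eq_zero_or_pos N with rfl | hN
  · simp [trajInv, qq]
  refine add_le_add (div_le_div_of_nonneg_right hvw (qq_pos hp hN le_rfl).le)
    (sum_le_sum fun l hl => ?_)
  exact mul_le_mul_of_nonneg_left (min_le_min_right _ hvw)
    (one_div_qq_sub_one_div_qq_succ_nonneg hp (mem_Ico.1 hl).1 (mem_Ico.1 hl).2)

lemma trajInv_zero (hp : ∀ i, 1 ≤ i → i ≤ N → 0 < p i) : trajInv N p T 0 = 0 := by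
  simp [trajInv, min_eq_left (height_nonneg hp _)]

lemma trajInv_nonneg (hp : ∀ i, 1 ≤ i → i ≤ N → 0 < p i) {v : ℝ} (hv : 0 ≤ v) :
    0 ≤ trajInv N p T v :=
  trajInv_zero (T := T) hp ▸ trajInv_mono hp hv

lemma trajInv_sub_trajInv (hp : ∀ i, 1 ≤ i → i ≤ N → 0 < p i) (hT : IsBreakpoints N T)
    {m : ℕ} (hm1 : 1 ≤ m) (hmN : m ≤ N) {v w : ℝ} (hv : height N p T m ≤ v) (hvw : v ≤ w)
    (hw : ∀ j, m < j → j ≤ N → w ≤ height N p T j) :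
    trajInv N p T w - trajInv N p T v = (w - v) / qq p m := by
  set c : ℕ → ℝ := fun l => 1 / qq p l - 1 / qq p (l + 1)
  have hhead : ∀ l ∈ Ico 1 m,
      c l * min w (height N p T (l + 1)) - c l * min v (height N p T (l + 1)) = 0 := by
    intro l hl
    obtain ⟨h1, hlm⟩ := mem_Ico.1 hl
    have := height_monotoneOn hp hT ⟨by omega, by omega⟩ ⟨hm1, hmN⟩ (show l + 1 ≤ m by omega)
    rw [min_eq_right (by linarith), min_eq_right (by linarith), sub_self]
  have htail : ∀ l ∈ Ico m N,
      c l * min w (height N p T (l + 1)) - c l * min v (height N p T (l + 1)) = c l * (w - v) := by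
    intro l hl
    have := hw (l + 1) (by have := (mem_Ico.1 hl).1; omega) (mem_Ico.1 hl).2
    rw [min_eq_left this, min_eq_left (hvw.trans this), mul_sub]
  have hqm := qq_pos hp hm1 hmN
  have hqN := qq_pos hp (hm1.trans hmN) le_rfl
  rw [trajInv, trajInv, add_sub_add_comm, ← sum_sub_distrib, ← sum_Ico_consecutive _ hm1 hmN,
    sum_congr rfl hhead, sum_congr rfl htail, sum_const_zero, zero_add, ← sum_mul,
    sum_Ico_sub_succ (fun l => 1 / qq p l) hmN]
  field_simp
  ring

lemma trajInv_height (hp : ∀ i, 1 ≤ i → i ≤ N → 0 < p i) (hT : IsBreakpoints N T) {j : ℕ}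
    (h1 : 1 ≤ j) (hj : j ≤ N) : trajInv N p T (height N p T j) = T j := by
  induction j, h1 using Nat.le_induction with
  | base => rw [height_one hT, trajInv_zero hp, hT.1]
  | succ j h1 ih =>
    have hmono := height_monotoneOn hp hT
    have := trajInv_sub_trajInv hp hT h1 (by omega) le_rfl
      (hmono ⟨h1, by omega⟩ ⟨by omega, hj⟩ (Nat.le_succ j))
      fun i hi hiN => hmono ⟨by omega, hj⟩ ⟨by omega, hiN⟩ hi
    rw [height_succ hT h1 hj, ih (by omega), add_sub_cancel_left,
      mul_div_cancel_left₀ _ (qq_pos hp h1 (by omega)).ne'] at this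
    rw [height_succ hT h1 hj]
    linarith

lemma traj_trajInv (hN : 1 ≤ N) (hp : ∀ i, 1 ≤ i → i ≤ N → 0 < p i) (hT : IsBreakpoints N T)
    {v : ℝ} (hv : 0 ≤ v) : traj N p T (trajInv N p T v) = v := by
  set m := Nat.findGreatest (fun l => height N p T l ≤ v) N
  have h1v : height N p T 1 ≤ v := by rwa [height_one hT]
  have hm1 : 1 ≤ m := Nat.le_findGreatest hN h1v
  have hmN : m ≤ N := Nat.findGreatest_le N
  have hmv : height N p T m ≤ v := Nat.findGreatest_spec (P := fun l => height N p T l ≤ v) hN h1v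
  have hvj : ∀ j, m < j → j ≤ N → v ≤ height N p T j := fun j hmj hjN =>
    (not_le.1 (Nat.findGreatest_is_greatest (P := fun l => height N p T l ≤ v) hmj hjN)).le
  have hinv := trajInv_sub_trajInv hp hT hm1 hmN le_rfl hmv hvj
  have htraj := traj_sub_traj (p := p) hT hmN le_rfl
    ((trajInv_height hp hT hm1 hmN).symm.trans_le (trajInv_mono hp hmv))
    fun j hmj hjN => (trajInv_mono hp (hvj j hmj hjN)).trans_eq
      (trajInv_height hp hT (by omega) hjN)
  rw [trajInv_height hp hT hm1 hmN] at hinv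
  rw [hinv, mul_div_cancel₀ _ (qq_pos hp hm1 hmN).ne'] at htraj
  rw [height] at htraj
  linarith

lemma tinv_eq_trajInv (hN : 1 ≤ N) (hp : ∀ i, 1 ≤ i → i ≤ N → 0 < p i)
    (hT : IsBreakpoints N T) {g : ℝ → ℝ} (hg : Set.EqOn g (traj N p T) (Set.Ici 0)) {v : ℝ}
    (hv : 0 ≤ v) : tinv g v = trajInv N p T v := by
  have hinv0 := trajInv_nonneg (T := T) hp hv
  have hex : ∃ x ∈ Set.Ici (0 : ℝ), g x = v :=
    ⟨_, hinv0, (hg hinv0).trans (traj_trajInv hN hp hT hv)⟩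
  have hmem : tinv g v ∈ Set.Ici 0 := Function.invFunOn_mem hex
  refine (traj_strictMonoOn hN hp hT).injOn hmem hinv0 ?_
  rw [← hg hmem, tinv, Function.invFunOn_eq hex, traj_trajInv hN hp hT hv]

lemma min_sub_min_le_min_sub_min {v w x y : ℝ} (hvw : v ≤ w) (hxy : x ≤ y) :
    min w x - min v x ≤ min w y - min v y := by
  simp only [min_def]
  split_ifs <;> linarith

lemma trajInv_sub_le_of_height_le (hp : ∀ i, 1 ≤ i → i ≤ N → 0 < p i)
    (hh : ∀ j, 1 ≤ j → j ≤ N → height N p T j ≤ height N p T' j) {v w : ℝ} (hvw : v ≤ w) :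
    trajInv N p T w - trajInv N p T v ≤ trajInv N p T' w - trajInv N p T' v := by
  simp only [trajInv, add_sub_add_comm, ← sum_sub_distrib, ← mul_sub]
  refine add_le_add le_rfl (sum_le_sum fun l hl => ?_)
  obtain ⟨h1, hlN⟩ := mem_Ico.1 hl
  exact mul_le_mul_of_nonneg_left (min_sub_min_le_min_sub_min hvw (hh (l + 1) (by omega) hlN))
    (one_div_qq_sub_one_div_qq_succ_nonneg hp h1 hlN)

lemma le_of_height_le (hp : ∀ i, 1 ≤ i → i ≤ N → 0 < p i) (hT : IsBreakpoints N T)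
    (hT' : IsBreakpoints N T')
    (hh : ∀ j, 1 ≤ j → j ≤ N → height N p T j ≤ height N p T' j)
    {j : ℕ} (h1 : 1 ≤ j) (hj : j ≤ N) : T j ≤ T' j := by
  have := trajInv_sub_le_of_height_le hp hh (height_nonneg (T := T') hp j)
  rw [trajInv_zero hp, trajInv_zero hp, sub_zero, sub_zero] at this
  calc T j = trajInv N p T (height N p T j) := (trajInv_height hp hT h1 hj).symm
    _ ≤ trajInv N p T (height N p T' j) := trajInv_mono hp (hh j h1 hj)
    _ ≤ trajInv N p T' (height N p T' j) := this
    _ = T' j := trajInv_height hp hT' h1 hj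

lemma traj_le_traj_of_height_le (hp : ∀ i, 1 ≤ i → i ≤ N → 0 < p i) (hT : IsBreakpoints N T)
    (hT' : IsBreakpoints N T')
    (hh : ∀ j, 1 ≤ j → j ≤ N → height N p T j ≤ height N p T' j) (t : ℝ) :
    traj N p T' t ≤ traj N p T t :=
  sum_le_sum fun j hj => mul_le_mul_of_nonneg_left
    (pos'_mono (sub_le_sub_left (le_of_height_le hp hT hT' hh (mem_Icc.1 hj).1 (mem_Icc.1 hj).2) t))
    (hp j (mem_Icc.1 hj).1 (mem_Icc.1 hj).2).le

def nextBreakpoints (N : ℕ) (a p T : ℕ → ℝ) (j : ℕ) : ℝ :=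
  trajInv N p T (a j) - trajInv N p T (a 1)

def breakpointsSeq (N : ℕ) (a p T₀ : ℕ → ℝ) : ℕ → ℕ → ℝ
  | 0 => T₀
  | k + 1 => nextBreakpoints N a p (breakpointsSeq N a p T₀ k)

lemma isBreakpoints_nextBreakpoints (hap : IsParam N a p) :
    IsBreakpoints N (nextBreakpoints N a p T) :=
  ⟨sub_self _, fun _ hi _ hj hij =>
    sub_le_sub_right (trajInv_mono hap.2.2 (hap.monotoneOn hi hj hij)) _⟩

lemma isBreakpoints_breakpointsSeq (hap : IsParam N a p) (hT : IsBreakpoints N T) :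
    ∀ k, IsBreakpoints N (breakpointsSeq N a p T k)
  | 0 => hT
  | _ + 1 => isBreakpoints_nextBreakpoints hap

lemma height_nextBreakpoints_le (hap : IsParam N a p)
    (hh : ∀ j, 1 ≤ j → j ≤ N → height N p T j ≤ height N p T' j) {j : ℕ} (h1 : 1 ≤ j)
    (hj : j ≤ N) :
    height N p (nextBreakpoints N a p T) j ≤ height N p (nextBreakpoints N a p T') j := by
  rw [height_eq_sum (isBreakpoints_nextBreakpoints hap) h1 hj,
    height_eq_sum (isBreakpoints_nextBreakpoints hap) h1 hj]
  refine sum_le_sum fun l hl => ?_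
  obtain ⟨hl1, hlj⟩ := mem_Icc.1 hl
  simp only [nextBreakpoints, sub_sub_sub_cancel_right]
  exact mul_le_mul_of_nonneg_left
    (trajInv_sub_le_of_height_le hap.2.2 hh (hap.monotoneOn ⟨hl1, hlj.trans hj⟩ ⟨h1, hj⟩ hlj))
    (hap.2.2 l hl1 (hlj.trans hj)).le

lemma height_breakpointsSeq_le (hap : IsParam N a p)
    (hh : ∀ j, 1 ≤ j → j ≤ N → height N p T j ≤ height N p T' j) :
    ∀ k j, 1 ≤ j → j ≤ N →
      height N p (breakpointsSeq N a p T k) j ≤ height N p (breakpointsSeq N a p T' k) j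
  | 0 => hh
  | k + 1 => fun _ => height_nextBreakpoints_le hap (height_breakpointsSeq_le hap hh k)

lemma eqOn_traj_breakpointsSeq (hN : 1 ≤ N) (hap : IsParam N a p) (hT : IsBreakpoints N T)
    {y : ℕ → ℝ → ℝ} (h₀ : Set.EqOn (y 0) (traj N p T) (Set.Ici 0))
    (hstep : ∀ k : ℕ, ∀ t : ℝ, 0 ≤ t →
      y (k + 1) t = ∑ j ∈ Icc 1 N, p j * pos' (t - tinv (y k) (a j) + tinv (y k) (a 1))) :
    ∀ k, Set.EqOn (y k) (traj N p (breakpointsSeq N a p T k)) (Set.Ici 0)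
  | 0 => h₀
  | k + 1 => fun t ht => by
    have hy := eqOn_traj_breakpointsSeq hN hap hT h₀ hstep k
    have hTk := isBreakpoints_breakpointsSeq hap hT k
    rw [hstep k t ht, traj]
    refine sum_congr rfl fun j hj => ?_
    rw [tinv_eq_trajInv hN hap.2.2 hTk hy (hap.pos (mem_Icc.1 hj).1 (mem_Icc.1 hj).2).le,
      tinv_eq_trajInv hN hap.2.2 hTk hy (hap.pos le_rfl hN).le, sub_add]
    rfl

lemma cminus_one : cminus a p 1 = 0 := if_pos le_rfl

lemma cminus_two : cminus a p 2 = a 2 / qq p 1 := by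
  rw [cminus, if_neg (by norm_num), Icc_self, sum_singleton]
  ring

lemma cminus_succ {j : ℕ} (h2 : 2 ≤ j) :
    cminus a p (j + 1) = cminus a p j + (a (j + 1) - a j) / qq p j := by
  rw [cminus, cminus, if_neg (by omega), if_neg (by omega), sum_Icc_succ_top (by omega),
    Nat.add_sub_cancel, add_assoc]

lemma isBreakpoints_cminus (hap : IsParam N a p) : IsBreakpoints N (cminus a p) := by
  refine ⟨cminus_one, monotoneOn_Icc_of_le_succ fun j h1 hj => ?_⟩
  have hq := qq_pos hap.2.2 h1 hj.le
  have ha := hap.2.1 j h1 hj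
  rcases h1.eq_or_lt with rfl | h2
  · rw [cminus_one, cminus_two]
    exact div_nonneg (hap.1.trans ha).le hq.le
  · rw [cminus_succ h2]
    exact le_add_of_nonneg_right (div_nonneg (sub_nonneg.2 ha.le) hq.le)

lemma height_cminus (hap : IsParam N a p) {j : ℕ} (h2 : 2 ≤ j) (hj : j ≤ N) :
    height N p (cminus a p) j = a j := by
  have hC := isBreakpoints_cminus hap
  induction j, h2 using Nat.le_induction with
  | base =>
    rw [height_succ hC le_rfl hj, height_one hC, cminus_two, cminus_one, sub_zero, zero_add,
      mul_div_cancel₀ _ (qq_pos hap.2.2 le_rfl (by omega)).ne']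
  | succ j h2 ih =>
    rw [height_succ hC (by omega) hj, ih (by omega), cminus_succ h2, add_sub_cancel_left,
      mul_div_cancel₀ _ (qq_pos hap.2.2 (by omega) (by omega)).ne']
    ring

lemma yplus0_eqOn : Set.EqOn (yplus0 N p) (traj N p 0) (Set.Ici 0) := fun t ht => by
  simp only [yplus0, traj, qq, sum_mul, Pi.zero_apply, sub_zero, pos'_of_nonneg ht]

lemma hasDerivWithinAt_pos'_sub (c t : ℝ) :
    HasDerivWithinAt (fun s => pos' (s - c)) (if c ≤ t then 1 else 0) (Set.Ici t) t := by
  split_ifs with hct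
  · exact ((hasDerivAt_id t).sub_const c).hasDerivWithinAt.congr_of_mem
      (fun s hs => pos'_of_nonneg (sub_nonneg.2 (hct.trans hs))) Set.self_mem_Ici
  · refine ((hasDerivAt_const t 0).congr_of_eventuallyEq ?_).hasDerivWithinAt
    filter_upwards [Iio_mem_nhds (not_le.1 hct)] with s hs
    exact pos'_of_nonpos (sub_nonpos.2 (le_of_lt hs))

lemma rD_eq_of_eqOn_traj {y₀ : ℝ → ℝ} (hy₀ : Set.EqOn y₀ (traj N p T) (Set.Ici 0)) {t : ℝ}
    (ht : 0 ≤ t) : rD y₀ t = ∑ j ∈ Icc 1 N, p j * if T j ≤ t then 1 else 0 := by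
  have hderiv : HasDerivWithinAt (traj N p T) (∑ j ∈ Icc 1 N, p j * if T j ≤ t then 1 else 0)
      (Set.Ici t) t :=
    HasDerivWithinAt.fun_sum fun j _ => (hasDerivWithinAt_pos'_sub (T j) t).const_mul (p j)
  exact (hderiv.congr_of_mem (fun s hs => hy₀ (ht.trans hs)) Set.self_mem_Ici).derivWithin
    (uniqueDiffWithinAt_Ici t)

lemma height_le_of_qq_le_rD (hN : 1 ≤ N) (hap : IsParam N a p) (hT : IsBreakpoints N T)
    {y₀ : ℝ → ℝ} (hy₀ : Set.EqOn y₀ (traj N p T) (Set.Ici 0))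
    (hsp : ∀ i, 1 ≤ i → i ≤ N → ∀ t : ℝ, 0 ≤ t → a i ≤ y₀ t → qq p i ≤ rD y₀ t)
    {i : ℕ} (h1 : 1 ≤ i) (hi : i ≤ N) : height N p T i ≤ a i := by
  have hp := hap.2.2
  by_contra! hlt
  obtain ⟨i, rfl⟩ : ∃ i', i = i' + 1 := ⟨i - 1, by omega⟩
  have hai := (hap.pos h1 hi).le
  set t := trajInv N p T (a (i + 1))
  have ht0 : 0 ≤ t := trajInv_nonneg hp hai
  have htT : t < T (i + 1) := lt_of_not_ge fun h =>
    hlt.not_ge ((traj_mono hp h).trans_eq (traj_trajInv hN hp hT hai))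
  have htail : ∑ j ∈ Ioc i N, p j * (if T j ≤ t then 1 else 0) = 0 := sum_eq_zero fun j hj => by
    obtain ⟨hij, hjN⟩ := mem_Ioc.1 hj
    rw [if_neg (not_le.2 (htT.trans_le (hT.2 ⟨h1, hi⟩ ⟨by omega, hjN⟩ hij))), mul_zero]
  have hslope : rD y₀ t ≤ qq p i := by
    rw [rD_eq_of_eqOn_traj hy₀ ht0, sum_Icc_one_eq_add _ (by omega : i ≤ N), htail, add_zero, qq]
    exact sum_le_sum fun j hj => mul_le_of_le_one_right
      (hp j (mem_Icc.1 hj).1 ((mem_Icc.1 hj).2.trans (by omega))).le (by split_ifs <;> simp)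
  have := hsp (i + 1) h1 hi t ht0 ((hy₀ ht0).trans (traj_trajInv hN hp hT hai)).ge
  rw [qq_succ] at this
  linarith [hp (i + 1) h1 hi]

lemma height_le_height_cminus (hN : 1 ≤ N) (hap : IsParam N a p) (hT : IsBreakpoints N T)
    {y₀ : ℝ → ℝ} (hy₀ : Set.EqOn y₀ (traj N p T) (Set.Ici 0))
    (hsp : ∀ i, 1 ≤ i → i ≤ N → ∀ t : ℝ, 0 ≤ t → a i ≤ y₀ t → qq p i ≤ rD y₀ t)
    {j : ℕ} (h1 : 1 ≤ j) (hj : j ≤ N) : height N p T j ≤ height N p (cminus a p) j := by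
  rcases h1.eq_or_lt with rfl | h2
  · rw [height_one hT, height_one (isBreakpoints_cminus hap)]
  · exact (height_le_of_qq_le_rD hN hap hT hy₀ hsp h1 hj).trans_eq (height_cminus hap h2 hj).symm

end Trajectory

end

open Trajectory in
/-- bounding trajectories, Proposition 3.6 of the paper. -/
theorem stmt_4 (N : ℕ) (hN : 1 ≤ N) (a p : ℕ → ℝ) (hap : IsParam N a p)
    (y : ℕ → ℝ → ℝ) (hy : SatisfiesR N a p y)
    (hsp : ∀ i, 1 ≤ i → i ≤ N → ∀ t : ℝ, 0 ≤ t → a i ≤ y 0 t → qq p i ≤ rD (y 0) t) :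
    ∀ k : ℕ, ∀ t : ℝ, 0 ≤ t →
      iterR N a p (yminus0 N a p) k t ≤ y k t ∧ y k t ≤ iterR N a p (yplus0 N p) k t := by
  obtain ⟨⟨c, hc1, -, hc_succ, hcy⟩, hrec⟩ := hy
  have hc : IsBreakpoints N c := ⟨hc1, monotoneOn_Icc_of_le_succ hc_succ⟩
  have hcm := isBreakpoints_cminus hap
  have h0 : IsBreakpoints N 0 := ⟨rfl, monotoneOn_const⟩
  have hy0 : Set.EqOn (y 0) (traj N p c) (Set.Ici 0) := fun t ht => hcy t ht
  have hlow : ∀ j, 1 ≤ j → j ≤ N → height N p c j ≤ height N p (cminus a p) j :=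
    fun _ => height_le_height_cminus hN hap hc hy0 hsp
  have hup : ∀ j, 1 ≤ j → j ≤ N → height N p 0 j ≤ height N p c j := fun j _ _ => by
    rw [height, Pi.zero_apply, traj_zero h0]
    exact height_nonneg hap.2.2 j
  intro k t ht
  rw [eqOn_traj_breakpointsSeq hN hap hc hy0 hrec k ht,
    eqOn_traj_breakpointsSeq (y := iterR N a p (yminus0 N a p)) hN hap hcm (fun _ _ => rfl)
      (fun _ _ _ => rfl) k ht,
    eqOn_traj_breakpointsSeq (y := iterR N a p (yplus0 N p)) hN hap h0 yplus0_eqOn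
      (fun _ _ _ => rfl) k ht]
  exact ⟨traj_le_traj_of_height_le hap.2.2 (isBreakpoints_breakpointsSeq hap hc k)
      (isBreakpoints_breakpointsSeq hap hcm k) (height_breakpointsSeq_le hap hlow k) t,
    traj_le_traj_of_height_le hap.2.2 (isBreakpoints_breakpointsSeq hap h0 k)
      (isBreakpoints_breakpointsSeq hap hc k) (height_breakpointsSeq_le hap hup k) t⟩
end
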